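/- Let λ > 0, c > 0 and let f₁, f₂, f₃, f₄ : ℝ × ℝ × ℝ → ℝ (arguments (x,y,t)) be four times continuously differentiable functions satisfying the first-order system ∂f₁/∂t = −c ∂f₁/∂x + λ(f₄ − f₁), ∂f₂/∂t = −c ∂f₂/∂y + λ(f₁ − f₂), ∂f₃/∂t = c ∂f₃/∂x + λ(f₂ − f₃), ∂f₄/∂t = c ∂f₄/∂y + λ(f₃ − f₄). Then p = f₁ + f₂ + f₃ + f₄ satisfies the fourth-order partial differential equation [(∂/∂t + λ)² − c² ∂²/∂x²] [(∂/∂t + λ)² − c² ∂²/∂y²] p − λ⁴ p = 0, where (∂/∂t + λ)² g means ∂²g/∂t² + 2λ ∂g/∂t + λ² g and the two bracketed operators are composed. -/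

import Mathlib

/-!
For a direction `w` let `L_w g = D_w g + λ g`. With `w₁ = (c, 0, 1)`, `w₂ = (0, c, 1)`,
`w₃ = (-c, 0, 1)`, `w₄ = (0, -c, 1)` the system reads `L_{wᵢ} fᵢ = λ fᵢ₋₁` (indices mod 4), and the
two operators of the equation factor as `L_{w₁} L_{w₃}` and `L_{w₂} L_{w₄}`. By the symmetry of
second derivatives the `L_w` commute on `C²` functions, so the fourfold product may be applied to
each `fᵢ` in the cyclic order ending with `L_{wᵢ}`, and then it returns `λ⁴ fᵢ`.
-/

/-- Partial derivative with respect to the first coordinate `x`. -/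
noncomputable def pdX (f : ℝ × ℝ × ℝ → ℝ) : ℝ × ℝ × ℝ → ℝ :=
  fun p => deriv (fun s => f (s, p.2.1, p.2.2)) p.1

/-- Partial derivative with respect to the second coordinate `y`. -/
noncomputable def pdY (f : ℝ × ℝ × ℝ → ℝ) : ℝ × ℝ × ℝ → ℝ :=
  fun p => deriv (fun s => f (p.1, s, p.2.2)) p.2.1

/-- Partial derivative with respect to the third coordinate `t` (time). -/
noncomputable def pdT (f : ℝ × ℝ × ℝ → ℝ) : ℝ × ℝ × ℝ → ℝ :=
  fun p => deriv (fun s => f (p.1, p.2.1, s)) p.2.2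

/-- The operator `(∂/∂t + λ)² − c² ∂²/∂x²`. -/
noncomputable def opX (lam c : ℝ) (g : ℝ × ℝ × ℝ → ℝ) : ℝ × ℝ × ℝ → ℝ :=
  fun p => pdT (pdT g) p + 2 * lam * pdT g p + lam ^ 2 * g p - c ^ 2 * pdX (pdX g) p

/-- The operator `(∂/∂t + λ)² − c² ∂²/∂y²`. -/
noncomputable def opY (lam c : ℝ) (g : ℝ × ℝ × ℝ → ℝ) : ℝ × ℝ × ℝ → ℝ :=
  fun p => pdT (pdT g) p + 2 * lam * pdT g p + lam ^ 2 * g p - c ^ 2 * pdY (pdY g) p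

section DampedDeriv

variable {E : Type*} [NormedAddCommGroup E] [NormedSpace ℝ E] {lam : ℝ}

noncomputable def dampedDeriv (lam : ℝ) (w : E) (g : E → ℝ) : E → ℝ :=
  fun p => fderiv ℝ g p w + lam * g p

lemma ContDiff.dampedDeriv {m n : WithTop ℕ∞} {g : E → ℝ} {w : E} (hg : ContDiff ℝ n g)
    (hmn : m + 1 ≤ n) : ContDiff ℝ m (dampedDeriv lam w g) :=
  ((hg.fderiv_right hmn).clm_apply contDiff_const).add
    (contDiff_const.mul (hg.of_le (le_self_add.trans hmn)))

lemma dampedDeriv_smul (a : ℝ) (g : E → ℝ) (w : E) :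
    dampedDeriv lam w (a • g) = a • dampedDeriv lam w g := by
  ext p
  simp only [dampedDeriv, fderiv_const_smul_field, Pi.smul_apply, smul_eq_mul,
    smul_apply]
  ring

lemma dampedDeriv_add {f g : E → ℝ} (hf : Differentiable ℝ f) (hg : Differentiable ℝ g) (w : E) :
    dampedDeriv lam w (f + g) = dampedDeriv lam w f + dampedDeriv lam w g := by
  ext p
  simp only [dampedDeriv, fderiv_add (hf p) (hg p), Pi.add_apply, add_apply]
  ring

lemma fderiv_fderiv_apply_const {g : E → ℝ} {p : E} (hg : DifferentiableAt ℝ (fderiv ℝ g) p)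
    (v w : E) : fderiv ℝ (fun q => fderiv ℝ g q w) p v = fderiv ℝ (fderiv ℝ g) p v w := by
  simp [fderiv_clm_apply hg (differentiableAt_const w)]

lemma dampedDeriv_dampedDeriv_apply {g : E → ℝ} (hg : ContDiff ℝ 2 g) (v w p : E) :
    dampedDeriv lam v (dampedDeriv lam w g) p =
      fderiv ℝ (fderiv ℝ g) p v w + lam * fderiv ℝ g p (v + w) + lam ^ 2 * g p := by
  have hg' : DifferentiableAt ℝ (fderiv ℝ g) p :=
    (hg.fderiv_right (m := 1) le_rfl).differentiable one_ne_zero p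
  have hg'w : DifferentiableAt ℝ (fun q => fderiv ℝ g q w) p :=
    hg'.clm_apply (differentiableAt_const w)
  have hg₀ : DifferentiableAt ℝ g p := hg.differentiable two_ne_zero p
  unfold dampedDeriv
  rw [fderiv_fun_add hg'w (hg₀.const_mul lam), fderiv_const_mul hg₀ lam]
  simp only [add_apply, smul_apply, smul_eq_mul,
    fderiv_fderiv_apply_const hg', map_add]
  ring

lemma dampedDeriv_comm {g : E → ℝ} (hg : ContDiff ℝ 2 g) (v w : E) :
    dampedDeriv lam v (dampedDeriv lam w g) = dampedDeriv lam w (dampedDeriv lam v g) := by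
  ext p
  rw [dampedDeriv_dampedDeriv_apply hg, dampedDeriv_dampedDeriv_apply hg, add_comm v w,
    (hg.contDiffAt.isSymmSndFDerivAt (by simp)).eq]

lemma dampedDeriv_add_smul_comp_sub_smul_apply {g : E → ℝ} (hg : ContDiff ℝ 2 g) (e v : E)
    (a : ℝ) (p : E) :
    dampedDeriv lam (e + a • v) (dampedDeriv lam (e - a • v) g) p =
      fderiv ℝ (fderiv ℝ g) p e e + 2 * lam * fderiv ℝ g p e + lam ^ 2 * g p
        - a ^ 2 * fderiv ℝ (fderiv ℝ g) p v v := by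
  rw [dampedDeriv_dampedDeriv_apply hg, add_add_sub_cancel, ← two_smul ℝ e]
  simp only [map_add, map_sub, map_smul, add_apply, smul_apply, smul_eq_mul,
    (hg.contDiffAt.isSymmSndFDerivAt (by simp)).eq v e]
  ring

lemma dampedDeriv_rotate {g : E → ℝ} (hg : ContDiff ℝ 4 g) (a b c d : E) :
    dampedDeriv lam a (dampedDeriv lam b (dampedDeriv lam c (dampedDeriv lam d g))) =
      dampedDeriv lam b (dampedDeriv lam c (dampedDeriv lam d (dampedDeriv lam a g))) := by
  have hd : ContDiff ℝ 3 (dampedDeriv lam d g) := hg.dampedDeriv (by norm_num)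
  have hcd : ContDiff ℝ 2 (dampedDeriv lam c (dampedDeriv lam d g)) :=
    hd.dampedDeriv (by norm_num)
  rw [dampedDeriv_comm hcd a b, dampedDeriv_comm (hd.of_le (by norm_num)) a c,
    dampedDeriv_comm (hg.of_le (by norm_num)) a d]

lemma dampedDeriv_chain {g₀ g₁ g₂ g₃ g₄ : E → ℝ} {a b c d : E}
    (h₄ : dampedDeriv lam d g₄ = lam • g₃) (h₃ : dampedDeriv lam c g₃ = lam • g₂)
    (h₂ : dampedDeriv lam b g₂ = lam • g₁) (h₁ : dampedDeriv lam a g₁ = lam • g₀) :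
    dampedDeriv lam a (dampedDeriv lam b (dampedDeriv lam c (dampedDeriv lam d g₄))) =
      lam ^ 4 • g₀ := by
  simp only [h₄, dampedDeriv_smul, h₃, h₂, h₁, smul_smul]
  ring_nf

lemma dampedDeriv_four_add {f g : E → ℝ} (hf : ContDiff ℝ 4 f) (hg : ContDiff ℝ 4 g)
    (a b c d : E) :
    dampedDeriv lam a (dampedDeriv lam b (dampedDeriv lam c (dampedDeriv lam d (f + g)))) =
      dampedDeriv lam a (dampedDeriv lam b (dampedDeriv lam c (dampedDeriv lam d f))) +
        dampedDeriv lam a (dampedDeriv lam b (dampedDeriv lam c (dampedDeriv lam d g))) := by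
  have hf₃ : ContDiff ℝ 3 (dampedDeriv lam d f) := hf.dampedDeriv (by norm_num)
  have hg₃ : ContDiff ℝ 3 (dampedDeriv lam d g) := hg.dampedDeriv (by norm_num)
  have hf₂ : ContDiff ℝ 2 (dampedDeriv lam c (dampedDeriv lam d f)) :=
    hf₃.dampedDeriv (by norm_num)
  have hg₂ : ContDiff ℝ 2 (dampedDeriv lam c (dampedDeriv lam d g)) :=
    hg₃.dampedDeriv (by norm_num)
  have hf₁ : ContDiff ℝ 1 (dampedDeriv lam b (dampedDeriv lam c (dampedDeriv lam d f))) :=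
    hf₂.dampedDeriv (by norm_num)
  have hg₁ : ContDiff ℝ 1 (dampedDeriv lam b (dampedDeriv lam c (dampedDeriv lam d g))) :=
    hg₂.dampedDeriv (by norm_num)
  rw [dampedDeriv_add (hf.differentiable (by norm_num)) (hg.differentiable (by norm_num)),
    dampedDeriv_add (hf₃.differentiable (by norm_num)) (hg₃.differentiable (by norm_num)),
    dampedDeriv_add (hf₂.differentiable (by norm_num)) (hg₂.differentiable (by norm_num)),
    dampedDeriv_add (hf₁.differentiable (by norm_num)) (hg₁.differentiable (by norm_num))]

theorem dampedDeriv_cyclic_sum {f₁ f₂ f₃ f₄ : E → ℝ} (hf₁ : ContDiff ℝ 4 f₁)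
    (hf₂ : ContDiff ℝ 4 f₂) (hf₃ : ContDiff ℝ 4 f₃) (hf₄ : ContDiff ℝ 4 f₄) {w₁ w₂ w₃ w₄ : E}
    (h₁ : dampedDeriv lam w₁ f₁ = lam • f₄) (h₂ : dampedDeriv lam w₂ f₂ = lam • f₁)
    (h₃ : dampedDeriv lam w₃ f₃ = lam • f₂) (h₄ : dampedDeriv lam w₄ f₄ = lam • f₃) :
    dampedDeriv lam w₁ (dampedDeriv lam w₂ (dampedDeriv lam w₃
      (dampedDeriv lam w₄ (f₁ + f₂ + f₃ + f₄)))) = lam ^ 4 • (f₁ + f₂ + f₃ + f₄) := by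
  have q₁ := (dampedDeriv_rotate hf₁ w₁ w₂ w₃ w₄).trans (dampedDeriv_chain h₁ h₄ h₃ h₂)
  have q₂ := (dampedDeriv_rotate hf₂ w₁ w₂ w₃ w₄).trans <|
    (dampedDeriv_rotate hf₂ w₂ w₃ w₄ w₁).trans (dampedDeriv_chain h₂ h₁ h₄ h₃)
  have q₃ := (dampedDeriv_rotate hf₃ w₁ w₂ w₃ w₄).trans <|
    (dampedDeriv_rotate hf₃ w₂ w₃ w₄ w₁).trans <|
      (dampedDeriv_rotate hf₃ w₃ w₄ w₁ w₂).trans (dampedDeriv_chain h₃ h₂ h₁ h₄)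
  have q₄ := dampedDeriv_chain h₄ h₃ h₂ h₁
  rw [dampedDeriv_four_add (f := f₁ + f₂ + f₃) ((hf₁.add hf₂).add hf₃) hf₄,
    dampedDeriv_four_add (f := f₁ + f₂) (hf₁.add hf₂) hf₃,
    dampedDeriv_four_add hf₁ hf₂, q₁, q₂, q₃, q₄, smul_add, smul_add, smul_add]

end DampedDeriv

lemma pdX_eq_fderiv {f : ℝ × ℝ × ℝ → ℝ} (hf : Differentiable ℝ f) :
    pdX f = fun p => fderiv ℝ f p (1, 0, 0) := by
  ext p
  have hγ : HasDerivAt (fun s : ℝ => ((s, p.2.1, p.2.2) : ℝ × ℝ × ℝ)) (1, 0, 0) p.1 :=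
    (hasDerivAt_id p.1).prodMk (hasDerivAt_const p.1 (p.2.1, p.2.2))
  exact ((hf p).hasFDerivAt.comp_hasDerivAt p.1 hγ).deriv

lemma pdY_eq_fderiv {f : ℝ × ℝ × ℝ → ℝ} (hf : Differentiable ℝ f) :
    pdY f = fun p => fderiv ℝ f p (0, 1, 0) := by
  ext p
  have hγ : HasDerivAt (fun s : ℝ => ((p.1, s, p.2.2) : ℝ × ℝ × ℝ)) (0, 1, 0) p.2.1 :=
    (hasDerivAt_const p.2.1 p.1).prodMk ((hasDerivAt_id p.2.1).prodMk (hasDerivAt_const _ _))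
  exact ((hf p).hasFDerivAt.comp_hasDerivAt p.2.1 hγ).deriv

lemma pdT_eq_fderiv {f : ℝ × ℝ × ℝ → ℝ} (hf : Differentiable ℝ f) :
    pdT f = fun p => fderiv ℝ f p (0, 0, 1) := by
  ext p
  have hγ : HasDerivAt (fun s : ℝ => ((p.1, p.2.1, s) : ℝ × ℝ × ℝ)) (0, 0, 1) p.2.2 :=
    (hasDerivAt_const p.2.2 p.1).prodMk ((hasDerivAt_const _ _).prodMk (hasDerivAt_id p.2.2))
  exact ((hf p).hasFDerivAt.comp_hasDerivAt p.2.2 hγ).deriv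

lemma dampedDeriv_apply_eq_pd {f : ℝ × ℝ × ℝ → ℝ} (hf : Differentiable ℝ f) (lam : ℝ)
    (w p : ℝ × ℝ × ℝ) :
    dampedDeriv lam w f p = w.1 * pdX f p + w.2.1 * pdY f p + w.2.2 * pdT f p + lam * f p := by
  have hw : w = w.1 • (1, 0, 0) + w.2.1 • (0, 1, 0) + w.2.2 • (0, 0, 1) := by ext <;> simp
  rw [pdX_eq_fderiv hf, pdY_eq_fderiv hf, pdT_eq_fderiv hf, dampedDeriv]
  conv_lhs => rw [hw]
  simp only [map_add, map_smul, smul_eq_mul]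

lemma opX_eq_dampedDeriv {g : ℝ × ℝ × ℝ → ℝ} (hg : ContDiff ℝ 2 g) (lam c : ℝ) :
    opX lam c g = dampedDeriv lam ((0, 0, 1) + c • (1, 0, 0))
      (dampedDeriv lam ((0, 0, 1) - c • (1, 0, 0)) g) := by
  have hg₁ : Differentiable ℝ g := hg.differentiable two_ne_zero
  have hg₂ : Differentiable ℝ (fderiv ℝ g) :=
    (hg.fderiv_right (m := 1) le_rfl).differentiable one_ne_zero
  ext p
  rw [dampedDeriv_add_smul_comp_sub_smul_apply hg, opX, pdT_eq_fderiv hg₁, pdX_eq_fderiv hg₁,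
    pdT_eq_fderiv (hg₂.clm_apply (differentiable_const _)),
    pdX_eq_fderiv (hg₂.clm_apply (differentiable_const _))]
  simp only [fderiv_fderiv_apply_const (hg₂ p)]

lemma opY_eq_dampedDeriv {g : ℝ × ℝ × ℝ → ℝ} (hg : ContDiff ℝ 2 g) (lam c : ℝ) :
    opY lam c g = dampedDeriv lam ((0, 0, 1) + c • (0, 1, 0))
      (dampedDeriv lam ((0, 0, 1) - c • (0, 1, 0)) g) := by
  have hg₁ : Differentiable ℝ g := hg.differentiable two_ne_zero
  have hg₂ : Differentiable ℝ (fderiv ℝ g) :=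
    (hg.fderiv_right (m := 1) le_rfl).differentiable one_ne_zero
  ext p
  rw [dampedDeriv_add_smul_comp_sub_smul_apply hg, opY, pdT_eq_fderiv hg₁, pdY_eq_fderiv hg₁,
    pdT_eq_fderiv (hg₂.clm_apply (differentiable_const _)),
    pdY_eq_fderiv (hg₂.clm_apply (differentiable_const _))]
  simp only [fderiv_fderiv_apply_const (hg₂ p)]

theorem cyclic_planar_fourth_order_pde_general
    (lam c : ℝ)
    (f₁ f₂ f₃ f₄ : ℝ × ℝ × ℝ → ℝ)
    (hf₁ : ContDiff ℝ 4 f₁) (hf₂ : ContDiff ℝ 4 f₂)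
    (hf₃ : ContDiff ℝ 4 f₃) (hf₄ : ContDiff ℝ 4 f₄)
    (h1 : ∀ p, pdT f₁ p = -c * pdX f₁ p + lam * (f₄ p - f₁ p))
    (h2 : ∀ p, pdT f₂ p = -c * pdY f₂ p + lam * (f₁ p - f₂ p))
    (h3 : ∀ p, pdT f₃ p = c * pdX f₃ p + lam * (f₂ p - f₃ p))
    (h4 : ∀ p, pdT f₄ p = c * pdY f₄ p + lam * (f₃ p - f₄ p)) :
    ∀ p, opX lam c (opY lam c (fun q => f₁ q + f₂ q + f₃ q + f₄ q)) p
      - lam ^ 4 * (f₁ p + f₂ p + f₃ p + f₄ p) = 0 := by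
  have hd {f : ℝ × ℝ × ℝ → ℝ} (hf : ContDiff ℝ 4 f) : Differentiable ℝ f :=
    hf.differentiable (by norm_num)
  have e₁ : dampedDeriv lam ((0, 0, 1) + c • (1, 0, 0)) f₁ = lam • f₄ := by
    ext p; simp [dampedDeriv_apply_eq_pd (hd hf₁), h1]; ring
  have e₂ : dampedDeriv lam ((0, 0, 1) + c • (0, 1, 0)) f₂ = lam • f₁ := by
    ext p; simp [dampedDeriv_apply_eq_pd (hd hf₂), h2]; ring
  have e₃ : dampedDeriv lam ((0, 0, 1) - c • (1, 0, 0)) f₃ = lam • f₂ := by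
    ext p; simp [dampedDeriv_apply_eq_pd (hd hf₃), h3]; ring
  have e₄ : dampedDeriv lam ((0, 0, 1) - c • (0, 1, 0)) f₄ = lam • f₃ := by
    ext p; simp [dampedDeriv_apply_eq_pd (hd hf₄), h4]; ring
  have hS : ContDiff ℝ 4 (f₁ + f₂ + f₃ + f₄) := ((hf₁.add hf₂).add hf₃).add hf₄
  have hS₃ : ContDiff ℝ 3 (dampedDeriv lam ((0, 0, 1) - c • (0, 1, 0)) (f₁ + f₂ + f₃ + f₄)) :=
    hS.dampedDeriv (by norm_num)
  have hcycle := dampedDeriv_cyclic_sum hf₁ hf₂ hf₃ hf₄ e₁ e₂ e₃ e₄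
  rw [dampedDeriv_comm (hS₃.of_le (by norm_num))] at hcycle
  intro p
  change opX lam c (opY lam c (f₁ + f₂ + f₃ + f₄)) p - _ = 0
  rw [opY_eq_dampedDeriv (hS.of_le (by norm_num)),
    opX_eq_dampedDeriv (hS₃.dampedDeriv (by norm_num)), hcycle]
  simp

theorem cyclic_planar_fourth_order_pde
    (lam c : ℝ) (hlam : 0 < lam) (hc : 0 < c)
    (f₁ f₂ f₃ f₄ : ℝ × ℝ × ℝ → ℝ)
    (hf₁ : ContDiff ℝ 4 f₁) (hf₂ : ContDiff ℝ 4 f₂)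
    (hf₃ : ContDiff ℝ 4 f₃) (hf₄ : ContDiff ℝ 4 f₄)
    (h1 : ∀ p, pdT f₁ p = -c * pdX f₁ p + lam * (f₄ p - f₁ p))
    (h2 : ∀ p, pdT f₂ p = -c * pdY f₂ p + lam * (f₁ p - f₂ p))
    (h3 : ∀ p, pdT f₃ p = c * pdX f₃ p + lam * (f₂ p - f₃ p))
    (h4 : ∀ p, pdT f₄ p = c * pdY f₄ p + lam * (f₃ p - f₄ p)) :
    ∀ p, opX lam c (opY lam c (fun q => f₁ q + f₂ q + f₃ q + f₄ q)) p
      - lam ^ 4 * (f₁ p + f₂ p + f₃ p + f₄ p) = 0 :=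
  cyclic_planar_fourth_order_pde_general lam c f₁ f₂ f₃ f₄ hf₁ hf₂ hf₃ hf₄ h1 h2 h3 h4
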